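/- For all N, all executions α, β ∈ {B,W,⊥}^N and input edges σ, τ: view_B(α,σ) = view_B(β,τ) if and only if (α,σ) ∼_B (β,τ), where ∼_B is the indistinguishability relation of the N-layer message-passing action model (and symmetrically for W). -/
import Mathlib


inductive Proc : Type where
  | B | W
deriving DecidableEq

/-- Layer symbols: `B` means only B's message was lost, `W` means only W's message was
lost, `bot` means both messages arrived. -/
inductive LSym : Type where
  | B | W | bot
deriving DecidableEq

/-- Projection of an input edge (pair of input values, B-component first) on an agent. -/
def proj {α : Type} : Proc → α × α → α
  | .B, e => e.1
  | .W, e => e.2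

def ownSym : Proc → LSym
  | .B => .B
  | .W => .W

def otherSym : Proc → LSym
  | .B => .W
  | .W => .B

/-- Views in the layered message-passing model: an input value, the empty view □,
or a pair of views. -/
inductive View (α : Type) : Type where
  | inp : α → View α
  | box : View α
  | pair : View α → View α → View α
deriving DecidableEq

/-- The view of a process after an execution (a list of layer symbols, most recent layer
first) starting from the input edge `e = (i,j)`:
`view a [] (i,j)` is the agent's own input; for a layer `x`,
if `x = B` then `view B = (V_B,V_W)` and `view W = (□,V_W)`;
if `x = W` then `view B = (V_B,□)` and `view W = (V_B,V_W)`;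
if `x = ⊥` then both views are `(V_B,V_W)`. -/
def view {α : Type} : Proc → List LSym → α × α → View α
  | a, [], e => .inp (proj a e)
  | .B, .W :: l, e => .pair (view .B l e) .box
  | .B, .B :: l, e => .pair (view .B l e) (view .W l e)
  | .B, .bot :: l, e => .pair (view .B l e) (view .W l e)
  | .W, .B :: l, e => .pair .box (view .W l e)
  | .W, .W :: l, e => .pair (view .B l e) (view .W l e)
  | .W, .bot :: l, e => .pair (view .B l e) (view .W l e)

/-- The indistinguishability relation `∼ₐ` of the layered message-passing action model,
on pairs (execution, input edge), executions written with the most recent layer first: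
for empty executions, indistinguishability means equal own inputs; `(α·p, X) ∼ₐ (β·q, Y)`
iff either `p = q` is the other agent's symbol (the message to `a` was lost) and
`(α,X) ∼ₐ (β,Y)`, or `p, q ∈ {⊥, own a}` and `α = β` and `X = Y`. -/
inductive Indist {α : Type} (a : Proc) :
    List LSym × (α × α) → List LSym × (α × α) → Prop where
  | nil : ∀ e f : α × α, proj a e = proj a f → Indist a ([], e) ([], f)
  | lost : ∀ (l m : List LSym) (e f : α × α), Indist a (l, e) (m, f) →
      Indist a (otherSym a :: l, e) (otherSym a :: m, f)
  | recv : ∀ (p q : LSym) (l : List LSym) (e : α × α),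
      (p = LSym.bot ∨ p = ownSym a) → (q = LSym.bot ∨ q = ownSym a) →
      Indist a (p :: l, e) (q :: l, e)


theorem view_ne_box {α : Type} (p : Proc) (l : List LSym) (e : α × α) :
    view p l e ≠ View.box := by
  cases p <;> cases l with
  | nil => simp [view]
  | cons x t => cases x <;> simp [view]

theorem box_ne_view {α : Type} (p : Proc) (l : List LSym) (e : α × α) :
    View.box ≠ view p l e := (view_ne_box p l e).symm

theorem view_both_inj {α : Type} (l m : List LSym) (σ τ : α × α)
    (hB : view Proc.B l σ = view Proc.B m τ)
    (hW : view Proc.W l σ = view Proc.W m τ) : l = m ∧ σ = τ := by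
  induction l generalizing m with
  | nil =>
    cases m with
    | nil =>
      simp [view, proj] at hB hW
      exact ⟨rfl, Prod.ext hB hW⟩
    | cons y t => cases y <;> simp [view] at hB
  | cons x t ih =>
    cases m with
    | nil => cases x <;> simp [view] at hB
    | cons y s =>
      cases x <;> cases y <;> simp [view, view_ne_box, box_ne_view] at hB hW
      case B.B => obtain ⟨rfl, rfl⟩ := ih s hB.1 hB.2; exact ⟨rfl, rfl⟩
      case W.W => obtain ⟨rfl, rfl⟩ := ih s hW.1 hW.2; exact ⟨rfl, rfl⟩
      case bot.bot => obtain ⟨rfl, rfl⟩ := ih s hB.1 hB.2; exact ⟨rfl, rfl⟩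

theorem view_eq_indist_aux {α : Type} (p : Proc) :
    ∀ (a b : List LSym) (σ τ : α × α), view p a σ = view p b τ → Indist p (a, σ) (b, τ) := by
  intro a
  induction a with
  | nil =>
    intro b σ τ h
    cases b with
    | nil =>
      refine Indist.nil σ τ ?_
      cases p <;> simpa [view, proj] using h
    | cons y s => exfalso; cases p <;> cases y <;> simp [view] at h
  | cons x t ih =>
    intro b σ τ h
    cases b with
    | nil => exfalso; cases p <;> cases x <;> simp [view] at h
    | cons y s =>
      cases p <;> cases x <;> cases y <;> simp [view, view_ne_box, box_ne_view] at h <;>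
        first
          | exact Indist.lost t s σ τ (ih s σ τ h)
          | (obtain ⟨rfl, rfl⟩ := view_both_inj t s σ τ h.1 h.2
             exact Indist.recv _ _ _ _ (by simp [ownSym]) (by simp [ownSym]))

theorem indist_view_aux {α : Type} (p : Proc) (x y : List LSym × (α × α))
    (h : Indist p x y) : view p x.1 x.2 = view p y.1 y.2 := by
  induction h with
  | nil e f h => cases p <;> simp_all [view, proj]
  | lost l m e f h ih => cases p <;> simp_all [view, otherSym]
  | recv q r l e hq hr =>
    cases p <;> rcases hq with rfl | rfl <;> rcases hr with rfl | rfl <;>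
      simp [view, ownSym]

/-- for all N, executions α, β of length N and input edges σ, τ, the views
of an agent agree on (α,σ) and (β,τ) iff the corresponding actions are indistinguishable
for that agent in the N-layer message-passing action model. -/
theorem view_eq_iff_indist {α : Type} (N : ℕ) (p : Proc) (a b : List LSym) (σ τ : α × α)
    (ha : a.length = N) (hb : b.length = N) :
    view p a σ = view p b τ ↔ Indist p (a, σ) (b, τ) := by
  constructor
  · exact view_eq_indist_aux p a b σ τ
  · exact indist_view_aux p (a, σ) (b, τ)
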